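/- arXiv:2604.11253 — 3 statements merged into one kernel-verified Lean document; each statement's English description precedes it below -/
import Mathlib

section
/- Let X₁, X₂ be independent real random variables, X₁' an independent copy of X₁, and g : ℝ × ℝ → ℝ measurable with g(X₁, X₂) square-integrable. If τ₁' := (1/2)·E[(g(X₁', X₂) − g(X₁, X₂))²] = 0, then g(X₁, X₂) = E[g(X₁, X₂) | X₂] almost surely; i.e., the output does not depend on X₁ (up to null sets). -/
open MeasureTheory ProbabilityTheory

/-- Zero-independence: if the free-permutation total index `τ₁'` vanishes, then the output
equals its conditional expectation given `X₂` almost surely, i.e. it does not depend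
on `X₁` up to null sets. -/
theorem output_indep_of_free_permutation_index_zero
    {Ω : Type*} [m0 : MeasurableSpace Ω] {μ : Measure Ω} [IsProbabilityMeasure μ]
    (X₁ X₂ X₁' : Ω → ℝ) (g : ℝ → ℝ → ℝ)
    (hX₁ : Measurable X₁) (hX₂ : Measurable X₂) (hX₁' : Measurable X₁')
    (hg : Measurable (Function.uncurry g))
    (hindep : IndepFun X₁ X₂ μ)
    (hcopy : IdentDistrib X₁' X₁ μ μ)
    (hindep' : IndepFun X₁' (fun ω => (X₁ ω, X₂ ω)) μ)
    (hg2 : MemLp (fun ω => g (X₁ ω) (X₂ ω)) 2 μ)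
    (hzero : (1 / 2 : ℝ) * ∫ ω, (g (X₁' ω) (X₂ ω) - g (X₁ ω) (X₂ ω)) ^ 2 ∂μ = 0) :
    (fun ω => g (X₁ ω) (X₂ ω)) =ᵐ[μ]
      μ[(fun ω => g (X₁ ω) (X₂ ω)) | MeasurableSpace.comap X₂ inferInstance] := by
  -- measurability of the pair
  have hpair : Measurable (fun ω => (X₁ ω, X₂ ω)) := hX₁.prodMk hX₂
  -- X₁' is independent of X₂
  have hX₁'X₂ : IndepFun X₁' X₂ μ := hindep'.comp measurable_id measurable_snd
  -- (X₁', X₂) has same law as (X₁, X₂)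
  have hmap1 : μ.map (fun ω => (X₁' ω, X₂ ω)) = (μ.map X₁').prod (μ.map X₂) :=
    (indepFun_iff_map_prod_eq_prod_map_map hX₁'.aemeasurable hX₂.aemeasurable).mp hX₁'X₂
  have hmap2 : μ.map (fun ω => (X₁ ω, X₂ ω)) = (μ.map X₁).prod (μ.map X₂) :=
    (indepFun_iff_map_prod_eq_prod_map_map hX₁.aemeasurable hX₂.aemeasurable).mp hindep
  have hpairid : IdentDistrib (fun ω => (X₁' ω, X₂ ω)) (fun ω => (X₁ ω, X₂ ω)) μ μ :=
    ⟨(hX₁'.prodMk hX₂).aemeasurable, hpair.aemeasurable, by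
      rw [hmap1, hmap2, hcopy.map_eq]⟩
  have hg2' : MemLp (fun ω => g (X₁' ω) (X₂ ω)) 2 μ :=
    (hpairid.comp hg).symm.memLp_snd hg2
  -- difference is in L², its square integrable
  have hΔ : MemLp (fun ω => g (X₁' ω) (X₂ ω) - g (X₁ ω) (X₂ ω)) 2 μ := hg2'.sub hg2
  have hint : Integrable (fun ω => (g (X₁' ω) (X₂ ω) - g (X₁ ω) (X₂ ω)) ^ 2) μ := by
    have := hΔ.integrable_sq
    simpa [pow_two] using this
  have hzero' : ∫ ω, (g (X₁' ω) (X₂ ω) - g (X₁ ω) (X₂ ω)) ^ 2 ∂μ = 0 := by linarith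
  have hae : ∀ᵐ ω ∂μ, g (X₁' ω) (X₂ ω) = g (X₁ ω) (X₂ ω) := by
    have h0 : (fun ω => (g (X₁' ω) (X₂ ω) - g (X₁ ω) (X₂ ω)) ^ 2) =ᵐ[μ] 0 :=
      (integral_eq_zero_iff_of_nonneg (fun ω => sq_nonneg _) hint).mp hzero'
    filter_upwards [h0] with ω hω
    have : (g (X₁' ω) (X₂ ω) - g (X₁ ω) (X₂ ω)) ^ 2 = 0 := hω
    have := pow_eq_zero_iff (n := 2) (by norm_num) |>.mp this
    linarith
  -- transfer to product law
  set ν := μ.map X₁' with hν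
  set π := μ.map (fun ω => (X₁ ω, X₂ ω)) with hπ
  haveI : IsProbabilityMeasure ν := Measure.isProbabilityMeasure_map hX₁'.aemeasurable
  haveI : IsProbabilityMeasure π := Measure.isProbabilityMeasure_map hpair.aemeasurable
  have hT : Measurable (fun ω => (X₁' ω, (X₁ ω, X₂ ω))) := hX₁'.prodMk hpair
  have hmapT : μ.map (fun ω => (X₁' ω, (X₁ ω, X₂ ω))) = ν.prod π :=
    (indepFun_iff_map_prod_eq_prod_map_map hX₁'.aemeasurable hpair.aemeasurable).mp hindep'
  have hset : MeasurableSet {q : ℝ × (ℝ × ℝ) | g q.1 q.2.2 = g q.2.1 q.2.2} := by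
    apply measurableSet_eq_fun
    · exact hg.comp (measurable_fst.prodMk (measurable_snd.snd))
    · exact hg.comp (measurable_snd.fst.prodMk (measurable_snd.snd))
  have haeprod : ∀ᵐ q ∂(ν.prod π), g q.1 q.2.2 = g q.2.1 q.2.2 := by
    rw [← hmapT]
    rw [ae_map_iff hT.aemeasurable hset]
    exact hae
  have haefub : ∀ᵐ x' ∂ν, ∀ᵐ q ∂π, g x' q.2 = g q.1 q.2 :=
    Measure.ae_ae_of_ae_prod haeprod
  obtain ⟨x₀, hx₀⟩ := haefub.exists
  -- pull back: g(X₁,X₂) = g(x₀, X₂) a.s.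
  have hset2 : MeasurableSet {q : ℝ × ℝ | g x₀ q.2 = g q.1 q.2} := by
    apply measurableSet_eq_fun
    · exact hg.comp (measurable_const.prodMk measurable_snd)
    · exact hg.comp (measurable_fst.prodMk measurable_snd)
  have hfeq : ∀ᵐ ω ∂μ, g (X₁ ω) (X₂ ω) = g x₀ (X₂ ω) := by
    have := (ae_map_iff hpair.aemeasurable hset2).mp hx₀
    filter_upwards [this] with ω hω using hω.symm
  -- conditional expectation
  have hm : MeasurableSpace.comap X₂ inferInstance ≤ m0 := hX₂.comap_le
  have hgx₀ : Measurable (fun y => g x₀ y) := hg.comp measurable_prodMk_left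
  have hhm : StronglyMeasurable[MeasurableSpace.comap X₂ inferInstance]
      (fun ω => g x₀ (X₂ ω)) :=
    (hgx₀.comp (Measurable.of_comap_le le_rfl)).stronglyMeasurable
  have hfi : Integrable (fun ω => g (X₁ ω) (X₂ ω)) μ := hg2.integrable one_le_two
  have hhi : Integrable (fun ω => g x₀ (X₂ ω)) μ := hfi.congr hfeq
  calc (fun ω => g (X₁ ω) (X₂ ω)) =ᵐ[μ] (fun ω => g x₀ (X₂ ω)) := hfeq
    _ = μ[(fun ω => g x₀ (X₂ ω)) | MeasurableSpace.comap X₂ inferInstance] :=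
        (condExp_of_stronglyMeasurable hm hhm hhi).symm
    _ =ᵐ[μ] μ[(fun ω => g (X₁ ω) (X₂ ω)) | MeasurableSpace.comap X₂ inferInstance] :=
        condExp_congr_ae (show (fun ω => g x₀ (X₂ ω)) =ᵐ[μ] (fun ω => g (X₁ ω) (X₂ ω)) from (Filter.EventuallyEq.symm hfeq))
end

section
/- Let g(x₁, x₂) : ℝ² → ℝ be continuously differentiable in x₁ with bounded partial derivative ∂₁g, and let X₂ be a random variable. For the equally spaced grid z_k = k/K on [0,1], define κ^ALE(K) := (1/K)·Σ_{k=1}^{K} E[((g(z_k, X₂) − g(z_{k−1}, X₂))·K)²]. Then κ^ALE(K) → ∫₀¹ E[(∂₁g(t, X₂))²] dt as K → ∞, provided ∂₁g(·, X₂) is continuous in t uniformly in probability and dominated. -/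
open MeasureTheory ProbabilityTheory Filter

private lemma riemann_aux_kale (h G : ℝ → ℝ) (hc : Continuous h)
    (hd : ∀ x, HasDerivAt G (h x) x) :
    Tendsto (fun K : ℕ => (1 / (K : ℝ)) * ∑ k ∈ Finset.Icc 1 K,
        ((G ((k : ℝ) / K) - G (((k : ℝ) - 1) / K)) * K) ^ 2) atTop
      (nhds (∫ t in (0 : ℝ)..1, (h t) ^ 2)) := by
  rw [Metric.tendsto_atTop]
  intro ε hε
  set f : ℝ → ℝ := fun t => (h t) ^ 2 with hf
  have hfc : Continuous f := by continuity
  have huc : UniformContinuousOn f (Set.Icc (0:ℝ) 1) :=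
    isCompact_Icc.uniformContinuousOn_of_continuous hfc.continuousOn
  rw [Metric.uniformContinuousOn_iff] at huc
  obtain ⟨δ, hδ, hδ'⟩ := huc (ε/2) (by positivity)
  obtain ⟨N₀, hN₀⟩ := exists_nat_gt (1/δ)
  refine ⟨max N₀ 1, fun K hK => ?_⟩
  have hK1 : 1 ≤ K := le_trans (le_max_right _ _) hK
  have hKpos : (0:ℝ) < K := by exact_mod_cast hK1
  have hKδ : 1 / (K:ℝ) < δ := by
    have h1 : (1:ℝ)/δ < K := lt_of_lt_of_le hN₀ (by exact_mod_cast le_trans (le_max_left _ _) hK)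
    have h2 : (1:ℝ) < K * δ := by rw [div_lt_iff₀ hδ] at h1; linarith
    rw [div_lt_iff₀ hKpos]; linarith
  have hre : ∑ k ∈ Finset.Icc 1 K, ((G ((k : ℝ) / K) - G (((k : ℝ) - 1) / K)) * K) ^ 2
      = ∑ i ∈ Finset.range K, ((G (((i:ℝ)+1) / K) - G ((i:ℝ) / K)) * K) ^ 2 := by
    rw [← Finset.Ico_add_one_right_eq_Icc, Finset.sum_Ico_eq_sum_range]
    refine Finset.sum_congr (by simp) fun i _ => ?_
    have e1 : ((1+i:ℕ):ℝ)/K = ((i:ℝ)+1)/K := by push_cast; ring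
    have e2 : (((1+i:ℕ):ℝ)-1)/K = (i:ℝ)/K := by push_cast; ring
    rw [e1, e2]
  set a : ℕ → ℝ := fun i => (i:ℝ)/K with ha
  have hint : ∀ i, IntervalIntegrable f volume (a i) (a (i+1)) :=
    fun i => hfc.intervalIntegrable _ _
  have hsplit : ∫ t in (0:ℝ)..1, f t = ∑ i ∈ Finset.range K, ∫ t in a i..a (i+1), f t := by
    rw [intervalIntegral.sum_integral_adjacent_intervals (fun i _ => hint i)]
    simp only [ha]
    norm_num [div_self hKpos.ne']
  have hstep : ∀ i, a (i+1) - a i = 1 / (K:ℝ) := by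
    intro i; simp only [ha]; push_cast; field_simp; ring
  have hlt : ∀ i, a i < a (i+1) := by
    intro i; have := hstep i; have : a (i+1) = a i + 1/(K:ℝ) := by linarith
    rw [this]; linarith [one_div_pos.mpr hKpos]
  have hξ : ∀ i, ∃ c ∈ Set.Ioo (a i) (a (i+1)),
      (G (a (i+1)) - G (a i)) * K = h c := by
    intro i
    obtain ⟨c, hc, hc'⟩ := exists_hasDerivAt_eq_slope G h (hlt i)
      (fun x _ => (hd x).continuousAt.continuousWithinAt) (fun x _ => hd x)
    refine ⟨c, hc, ?_⟩
    rw [hc', hstep i]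
    field_simp
  choose ξ hξmem hξval using hξ
  have hmem01 : ∀ i, i < K → ∀ t ∈ Set.Icc (a i) (a (i+1)), t ∈ Set.Icc (0:ℝ) 1 := by
    intro i hi t ht
    constructor
    · have : (0:ℝ) ≤ a i := by positivity
      linarith [ht.1]
    · have : a (i+1) ≤ 1 := by
        simp only [ha]; rw [div_le_one hKpos]; push_cast
        exact_mod_cast Nat.succ_le_of_lt hi
      linarith [ht.2]
  have key : (1 / (K : ℝ)) * ∑ k ∈ Finset.Icc 1 K,
        ((G ((k : ℝ) / K) - G (((k : ℝ) - 1) / K)) * K) ^ 2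
      = ∑ i ∈ Finset.range K, (1/(K:ℝ)) * f (ξ i) := by
    rw [hre, Finset.mul_sum]
    refine Finset.sum_congr rfl fun i _ => ?_
    have e3 : a (i+1) = ((i:ℝ)+1)/K := by simp only [ha]; push_cast; ring
    have e4 : a i = (i:ℝ)/K := rfl
    have h5 := hξval i
    rw [e3, e4] at h5
    rw [h5]
  rw [key]
  have hterm : ∀ i ∈ Finset.range K,
      |(1/(K:ℝ)) * f (ξ i) - ∫ t in a i..a (i+1), f t| ≤ (ε/2) * (1/(K:ℝ)) := by
    intro i hi
    have hconst : (1/(K:ℝ)) * f (ξ i) = ∫ t in a i..a (i+1), f (ξ i) := by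
      rw [intervalIntegral.integral_const, hstep i, smul_eq_mul]
    rw [hconst, ← intervalIntegral.integral_sub (intervalIntegrable_const) (hint i)]
    have := intervalIntegral.norm_integral_le_of_norm_le_const (a := a i) (b := a (i+1))
      (C := ε/2) (f := fun t => f (ξ i) - f t) ?_
    · rw [Real.norm_eq_abs] at this
      calc _ ≤ (ε/2) * |a (i+1) - a i| := this
        _ = (ε/2) * (1/(K:ℝ)) := by rw [hstep i, abs_of_pos (by positivity)]
    · intro t ht
      rw [Set.uIoc_of_le (hlt i).le] at ht
      have ht' : t ∈ Set.Icc (0:ℝ) 1 := hmem01 i (Finset.mem_range.mp hi) t ⟨ht.1.le, ht.2⟩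
      have hξ' : ξ i ∈ Set.Icc (0:ℝ) 1 := hmem01 i (Finset.mem_range.mp hi) _
        ⟨(hξmem i).1.le, (hξmem i).2.le⟩
      have hdist : dist (ξ i) t < δ := by
        rw [Real.dist_eq]
        have h1 := (hξmem i).1; have h2 := (hξmem i).2
        have h3 := hstep i
        have h4 : |ξ i - t| < 1/(K:ℝ) := by
          rw [abs_lt]; constructor <;> [linarith [ht.2]; linarith [ht.1]]
        linarith
      have := hδ' _ hξ' _ ht' hdist
      rw [Real.dist_eq] at this
      rw [Real.norm_eq_abs]
      exact this.le
  calc dist (∑ i ∈ Finset.range K, (1/(K:ℝ)) * f (ξ i)) (∫ t in (0:ℝ)..1, f t)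
      = |∑ i ∈ Finset.range K, ((1/(K:ℝ)) * f (ξ i) - ∫ t in a i..a (i+1), f t)| := by
        rw [Real.dist_eq, hsplit, Finset.sum_sub_distrib]
    _ ≤ ∑ i ∈ Finset.range K, |(1/(K:ℝ)) * f (ξ i) - ∫ t in a i..a (i+1), f t| :=
        Finset.abs_sum_le_sum_abs _ _
    _ ≤ ∑ _i ∈ Finset.range K, (ε/2) * (1/(K:ℝ)) := Finset.sum_le_sum hterm
    _ = (ε/2) := by
        rw [Finset.sum_const, Finset.card_range, nsmul_eq_mul]
        field_simp
    _ < ε := by linarith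

private lemma measurable_uncurry_deriv_kale (g g₁ : ℝ → ℝ → ℝ)
    (hg : Measurable (Function.uncurry g))
    (hderiv : ∀ x y, HasDerivAt (fun t => g t y) (g₁ x y) x) :
    Measurable (Function.uncurry g₁) := by
  have hq : ∀ n : ℕ, Measurable (fun p : ℝ × ℝ => (g (p.1 + 1/(n+1)) p.2 - g p.1 p.2) * (n+1)) := by
    intro n
    exact ((hg.comp ((measurable_fst.add_const _).prodMk measurable_snd)).sub hg).mul
      measurable_const
  refine measurable_of_tendsto_metrizable hq ?_
  rw [tendsto_pi_nhds]
  rintro ⟨x, y⟩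
  have hslope := hasDerivAt_iff_tendsto_slope.mp (hderiv x y)
  have hxn : Tendsto (fun n : ℕ => x + 1/(n+1)) atTop (nhdsWithin x {x}ᶜ) := by
    rw [tendsto_nhdsWithin_iff]
    constructor
    · have h0 := tendsto_one_div_add_atTop_nhds_zero_nat (𝕜 := ℝ)
      have := (tendsto_const_nhds (x := x) (f := atTop (α := ℕ))).add h0
      simpa using this
    · filter_upwards with n
      have h1 : (0:ℝ) < 1/(n+1) := by positivity
      simp only [Set.mem_compl_iff, Set.mem_singleton_iff]
      intro h; nlinarith [congrArg (· - x) h]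
  have := hslope.comp hxn
  convert this using 2 with n
  simp only [Function.comp_apply, slope_def_field, Function.uncurry]
  field_simp
  ring
  rfl

/-- In the refinement limit, the derivative-based ALE index `κ^ALE(K)` (average expected
squared Newton quotient over the equally spaced grid on `[0,1]`) converges to the
derivative-based sensitivity measure `∫₀¹ E[(∂₁g(t, X₂))²] dt`. -/
theorem kappa_ale_tendsto_derivative_index
    {Ω : Type*} [MeasurableSpace Ω] {μ : Measure Ω} [IsProbabilityMeasure μ]
    (X₂ : Ω → ℝ) (hX₂ : Measurable X₂)
    (g g₁ : ℝ → ℝ → ℝ)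
    (hg : Measurable (Function.uncurry g))
    (hderiv : ∀ x y, HasDerivAt (fun t => g t y) (g₁ x y) x)
    (hcont : ∀ y, Continuous fun x => g₁ x y)
    (hbdd : ∃ M : ℝ, ∀ x y, |g₁ x y| ≤ M) :
    Tendsto
      (fun K : ℕ => (1 / (K : ℝ)) * ∑ k ∈ Finset.Icc 1 K,
        ∫ ω, ((g ((k : ℝ) / K) (X₂ ω) - g (((k : ℝ) - 1) / K) (X₂ ω)) * K) ^ 2 ∂μ)
      atTop
      (nhds (∫ t in (0 : ℝ)..1, ∫ ω, (g₁ t (X₂ ω)) ^ 2 ∂μ)) := by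
  obtain ⟨M, hM⟩ := hbdd
  have hM0 : 0 ≤ M := (abs_nonneg _).trans (hM 0 0)
  -- pointwise bound for the Newton quotient
  have hquot : ∀ (K k : ℕ), 1 ≤ k → k ≤ K → ∀ y : ℝ,
      ((g ((k:ℝ)/K) y - g (((k:ℝ)-1)/K) y) * K) ^ 2 ≤ M ^ 2 := by
    intro K k hk1 hkK y
    have hK1 : 1 ≤ K := le_trans hk1 hkK
    have hKpos : (0:ℝ) < K := by exact_mod_cast hK1
    set b : ℝ := (k:ℝ)/K
    set a : ℝ := ((k:ℝ)-1)/K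
    have hstep : b - a = 1/(K:ℝ) := by simp only [a, b]; field_simp; ring
    have hab : a < b := by
      have : b = a + 1/(K:ℝ) := by linarith
      rw [this]; linarith [one_div_pos.mpr hKpos]
    obtain ⟨c, _, hc⟩ := exists_hasDerivAt_eq_slope (fun t => g t y) (fun x => g₁ x y) hab
      (fun x _ => (hderiv x y).continuousAt.continuousWithinAt) (fun x _ => hderiv x y)
    have hval : (g b y - g a y) * K = g₁ c y := by
      rw [hc, hstep]; field_simp
    rw [hval]
    calc (g₁ c y) ^ 2 = |g₁ c y| ^ 2 := (sq_abs _).symm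
      _ ≤ M ^ 2 := pow_le_pow_left₀ (abs_nonneg _) (hM c y) 2
  -- measurability of terms
  have hgm : ∀ c : ℝ, Measurable fun ω => g c (X₂ ω) := fun c =>
    hg.comp (measurable_const.prodMk hX₂)
  have htermMeas : ∀ (K k : ℕ), Measurable fun ω =>
      ((g ((k:ℝ)/K) (X₂ ω) - g (((k:ℝ)-1)/K) (X₂ ω)) * (K:ℝ)) ^ 2 := fun K k =>
    (((hgm _).sub (hgm _)).mul measurable_const).pow_const 2
  have htermInt : ∀ (K : ℕ) (k : ℕ), k ∈ Finset.Icc 1 K → Integrable (fun ω =>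
      ((g ((k:ℝ)/K) (X₂ ω) - g (((k:ℝ)-1)/K) (X₂ ω)) * (K:ℝ)) ^ 2) μ := by
    intro K k hk
    rw [Finset.mem_Icc] at hk
    refine Integrable.mono' (integrable_const (M^2)) (htermMeas K k).aestronglyMeasurable ?_
    filter_upwards with ω
    rw [Real.norm_eq_abs, abs_of_nonneg (sq_nonneg _)]
    exact hquot K k hk.1 hk.2 (X₂ ω)
  -- rewrite κ(K) as a single integral
  set F : ℕ → Ω → ℝ := fun K ω => (1/(K:ℝ)) * ∑ k ∈ Finset.Icc 1 K,
      ((g ((k:ℝ)/K) (X₂ ω) - g (((k:ℝ)-1)/K) (X₂ ω)) * (K:ℝ)) ^ 2 with hF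
  have hκ : ∀ K : ℕ, (1 / (K : ℝ)) * ∑ k ∈ Finset.Icc 1 K,
      ∫ ω, ((g ((k : ℝ) / K) (X₂ ω) - g (((k : ℝ) - 1) / K) (X₂ ω)) * K) ^ 2 ∂μ
      = ∫ ω, F K ω ∂μ := by
    intro K
    rw [hF]
    rw [← integral_finset_sum _ (htermInt K), ← MeasureTheory.integral_const_mul]
  -- Fubini for the limit
  have hg₁m : Measurable (Function.uncurry g₁) := measurable_uncurry_deriv_kale g g₁ hg hderiv
  have hprodMeas : Measurable fun p : Ω × ℝ => (g₁ p.2 (X₂ p.1)) ^ 2 :=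
    (hg₁m.comp (measurable_snd.prodMk (hX₂.comp measurable_fst))).pow_const 2
  haveI : IsFiniteMeasure (volume.restrict (Set.Ioc (0:ℝ) 1)) :=
    ⟨by simp [Real.volume_Ioc]⟩
  have hswap : ∫ ω, (∫ t in (0:ℝ)..1, (g₁ t (X₂ ω)) ^ 2) ∂μ
      = ∫ t in (0:ℝ)..1, ∫ ω, (g₁ t (X₂ ω)) ^ 2 ∂μ := by
    rw [intervalIntegral.integral_of_le (by norm_num : (0:ℝ) ≤ 1)]
    have := MeasureTheory.integral_integral_swap (μ := μ)
      (ν := volume.restrict (Set.Ioc (0:ℝ) 1))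
      (f := fun ω t => (g₁ t (X₂ ω)) ^ 2) ?_
    · rw [← this]
      congr 1
      ext ω
      rw [intervalIntegral.integral_of_le (by norm_num : (0:ℝ) ≤ 1)]
    · refine Integrable.mono' (integrable_const (M^2)) hprodMeas.aestronglyMeasurable ?_
      filter_upwards with p
      simp only [Function.uncurry]
      rw [Real.norm_eq_abs, abs_of_nonneg (sq_nonneg _)]
      calc (g₁ p.2 (X₂ p.1))^2 = |g₁ p.2 (X₂ p.1)|^2 := (sq_abs _).symm
        _ ≤ M^2 := pow_le_pow_left₀ (abs_nonneg _) (hM _ _) 2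
  rw [← hswap]
  have hfun : (fun K : ℕ => (1 / (K : ℝ)) * ∑ k ∈ Finset.Icc 1 K,
      ∫ ω, ((g ((k : ℝ) / K) (X₂ ω) - g (((k : ℝ) - 1) / K) (X₂ ω)) * K) ^ 2 ∂μ)
      = fun K => ∫ ω, F K ω ∂μ := funext hκ
  rw [hfun]
  -- dominated convergence
  refine MeasureTheory.tendsto_integral_of_dominated_convergence (fun _ => M^2)
    (fun K => ?_) (integrable_const _) (fun K => ?_) ?_
  · exact (Measurable.const_mul (Finset.measurable_sum _ fun k _ => htermMeas K k)
      _).aestronglyMeasurable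
  · filter_upwards with ω
    rw [hF, Real.norm_eq_abs]
    rcases Nat.eq_zero_or_pos K with hK0 | hKpos
    · subst hK0; simp; positivity
    · have hKpos' : (0:ℝ) < K := by exact_mod_cast hKpos
      have habs : |(1/(K:ℝ)) * ∑ k ∈ Finset.Icc 1 K,
          ((g ((k:ℝ)/K) (X₂ ω) - g (((k:ℝ)-1)/K) (X₂ ω)) * (K:ℝ)) ^ 2|
          = (1/(K:ℝ)) * ∑ k ∈ Finset.Icc 1 K,
          ((g ((k:ℝ)/K) (X₂ ω) - g (((k:ℝ)-1)/K) (X₂ ω)) * (K:ℝ)) ^ 2 := by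
        rw [abs_of_nonneg]
        positivity
      rw [habs]
      have hsum : ∑ k ∈ Finset.Icc 1 K,
          ((g ((k:ℝ)/K) (X₂ ω) - g (((k:ℝ)-1)/K) (X₂ ω)) * (K:ℝ)) ^ 2
          ≤ ∑ _k ∈ Finset.Icc 1 K, M ^ 2 := by
        refine Finset.sum_le_sum fun k hk => ?_
        rw [Finset.mem_Icc] at hk
        exact hquot K k hk.1 hk.2 (X₂ ω)
      have hcard : ∑ _k ∈ Finset.Icc 1 K, M ^ 2 = (K:ℝ) * M ^ 2 := by
        rw [Finset.sum_const, Nat.card_Icc, nsmul_eq_mul]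
        push_cast
        ring
      calc (1/(K:ℝ)) * ∑ k ∈ Finset.Icc 1 K,
          ((g ((k:ℝ)/K) (X₂ ω) - g (((k:ℝ)-1)/K) (X₂ ω)) * (K:ℝ)) ^ 2
          ≤ (1/(K:ℝ)) * ((K:ℝ) * M ^ 2) := by
            rw [← hcard]
            exact mul_le_mul_of_nonneg_left hsum (by positivity)
        _ = M ^ 2 := by field_simp
  · filter_upwards with ω
    exact riemann_aux_kale (fun t => g₁ t (X₂ ω)) (fun t => g t (X₂ ω))
      (hcont (X₂ ω)) (fun x => hderiv x (X₂ ω))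
end

section
/- Let X₁, X₂ be independent real random variables with X₁ uniform on [0,1], and let g : ℝ × ℝ → ℝ be measurable with square-integrable outputs. Let π be a uniformly random permutation of {1, …, N} independent of an i.i.d. sample (X₁⁽ⁿ⁾, X₂⁽ⁿ⁾), n = 1, …, N. Then the empirical permuted-loss statistic (1/N)·Σ_n (g(X₁^{(π(n))}, X₂⁽ⁿ⁾) − g(X₁⁽ⁿ⁾, X₂⁽ⁿ⁾))² has expectation (1 − 1/N)·E[(g(X₁', X₂) − g(X₁, X₂))²], where X₁' is an independent copy of X₁; hence the estimator ν̂₁ is asymptotically unbiased for 2τ₁' as N → ∞. -/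
open MeasureTheory ProbabilityTheory
open scoped ENNReal

/-- Permutations of `Fin N` carry the discrete σ-algebra. -/
instance (N : ℕ) : MeasurableSpace (Equiv.Perm (Fin N)) := ⊤

instance (N : ℕ) : MeasurableSingletonClass (Equiv.Perm (Fin N)) :=
  ⟨fun _ => MeasurableSpace.measurableSet_top⟩

/-- Counting lemma: the number of permutations fixing a given point, times `N`,
equals the total number of permutations. -/
lemma card_fixing_mul (N : ℕ) (n : Fin N) :
    (Finset.univ.filter fun σ : Equiv.Perm (Fin N) => σ n = n).card * N
      = Fintype.card (Equiv.Perm (Fin N)) := by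
  classical
  have hcard : (Finset.univ.filter fun σ : Equiv.Perm (Fin N) => σ n = n).card
      = Fintype.card (MulAction.stabilizer (Equiv.Perm (Fin N)) n) := by
    rw [← Fintype.card_subtype]
    exact Fintype.card_congr (Equiv.subtypeEquivRight (by
      intro σ; simp [MulAction.mem_stabilizer_iff, Equiv.Perm.smul_def]))
  haveI : Fintype (MulAction.orbit (Equiv.Perm (Fin N)) n) := Fintype.ofFinite _
  have horb : MulAction.orbit (Equiv.Perm (Fin N)) n = Set.univ := by
    refine Set.eq_univ_of_forall fun b => ?_
    exact ⟨Equiv.swap n b, Equiv.swap_apply_left n b⟩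
  have hcardorb : Fintype.card (MulAction.orbit (Equiv.Perm (Fin N)) n) = N := by
    rw [Fintype.card_congr (Equiv.setCongr horb), Fintype.card_congr (Equiv.Set.univ _),
      Fintype.card_fin]
  have := MulAction.card_orbit_mul_card_stabilizer_eq_card_group (Equiv.Perm (Fin N)) n
  rw [hcardorb] at this
  rw [hcard, mul_comm]
  exact this

/-- The empirical Breiman permuted-loss statistic with a uniformly random permutation of the
first feature's column has expectation `(1 − 1/N)·E[(g(X₁', X₂) − g(X₁, X₂))²]`; hence the
estimator is asymptotically unbiased for `2τ₁'`. -/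
theorem empirical_permutation_importance_expectation
    {Ω : Type*} [MeasurableSpace Ω] {μ : Measure Ω} [IsProbabilityMeasure μ]
    (N : ℕ) (hN : 0 < N)
    (X₁ X₂ X₁' : Ω → ℝ)
    (hX₁ : Measurable X₁) (hX₂ : Measurable X₂) (hX₁' : Measurable X₁')
    (hX₁law : Measure.map X₁ μ = volume.restrict (Set.Icc (0 : ℝ) 1))
    (hindep12 : IndepFun X₁ X₂ μ)
    (hcopy : IdentDistrib X₁' X₁ μ μ)
    (hindep' : IndepFun X₁' (fun ω => (X₁ ω, X₂ ω)) μ)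
    (g : ℝ → ℝ → ℝ) (hg : Measurable (Function.uncurry g))
    (hg2 : MemLp (fun ω => g (X₁ ω) (X₂ ω)) 2 μ)
    (ξ : Fin N → Ω → ℝ × ℝ) (hξ : ∀ n, Measurable (ξ n))
    (hξiid : iIndepFun ξ μ)
    (hξlaw : ∀ n, IdentDistrib (ξ n) (fun ω => (X₁ ω, X₂ ω)) μ μ)
    (π : Ω → Equiv.Perm (Fin N)) (hπ : Measurable π)
    (hπunif : Measure.map π μ = (PMF.uniformOfFintype (Equiv.Perm (Fin N))).toMeasure)
    (hπindep : IndepFun π (fun ω => fun n => ξ n ω) μ) :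
    ∫ ω, (1 / (N : ℝ)) * ∑ n : Fin N,
        (g (ξ (π ω n) ω).1 (ξ n ω).2 - g (ξ n ω).1 (ξ n ω).2) ^ 2 ∂μ =
      (1 - 1 / (N : ℝ)) * ∫ ω, (g (X₁' ω) (X₂ ω) - g (X₁ ω) (X₂ ω)) ^ 2 ∂μ := by
  classical
  -- notation
  set ν : Measure (ℝ × ℝ) := μ.map (fun ω => (X₁ ω, X₂ ω)) with hν
  have hXpair : Measurable (fun ω => (X₁ ω, X₂ ω)) := hX₁.prodMk hX₂
  haveI : IsProbabilityMeasure ν := Measure.isProbabilityMeasure_map hXpair.aemeasurable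
  set κ : Measure ℝ := μ.map X₁ with hκ
  haveI : IsProbabilityMeasure κ := Measure.isProbabilityMeasure_map hX₁.aemeasurable
  -- the kernel function
  set k : ℝ × (ℝ × ℝ) → ℝ≥0∞ :=
    fun p => ENNReal.ofReal ((g p.1 p.2.2 - g p.2.1 p.2.2) ^ 2) with hkdef
  have hkm : Measurable k := by
    apply ENNReal.measurable_ofReal.comp
    exact ((hg.comp (measurable_fst.prodMk measurable_snd.snd)).sub
      (hg.comp (measurable_snd.fst.prodMk measurable_snd.snd))).pow_const 2
  set G : ℝ → ℝ≥0∞ := fun t => ∫⁻ b, k (t, b) ∂ν with hGdef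
  have hGm : Measurable G := Measurable.lintegral_prod_right hkm
  -- the limiting quantity
  set I : ℝ≥0∞ := ∫⁻ ω, ENNReal.ofReal ((g (X₁' ω) (X₂ ω) - g (X₁ ω) (X₂ ω)) ^ 2) ∂μ with hIdef
  -- I as a double integral
  have hI : I = ∫⁻ t, G t ∂κ := by
    have hpm : Measurable (fun ω => (X₁' ω, (X₁ ω, X₂ ω))) := hX₁'.prodMk hXpair
    have hmap : μ.map (fun ω => (X₁' ω, (X₁ ω, X₂ ω))) = κ.prod ν := by
      rw [(indepFun_iff_map_prod_eq_prod_map_map hX₁'.aemeasurable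
        hXpair.aemeasurable).mp hindep', hcopy.map_eq]
    calc I = ∫⁻ p, k p ∂(μ.map (fun ω => (X₁' ω, (X₁ ω, X₂ ω)))) :=
          (lintegral_map hkm hpm).symm
      _ = ∫⁻ p, k p ∂(κ.prod ν) := by rw [hmap]
      _ = ∫⁻ t, G t ∂κ := lintegral_prod _ hkm.aemeasurable
  -- key lemma: per-pair identity
  have key : ∀ m n : Fin N, m ≠ n →
      ∫⁻ ω, ENNReal.ofReal ((g (ξ m ω).1 (ξ n ω).2 - g (ξ n ω).1 (ξ n ω).2) ^ 2) ∂μ = I := by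
    intro m n hmn
    have hpm : Measurable (fun ω => (ξ m ω, ξ n ω)) := (hξ m).prodMk (hξ n)
    have hmap : μ.map (fun ω => (ξ m ω, ξ n ω)) = ν.prod ν := by
      rw [(indepFun_iff_map_prod_eq_prod_map_map (hξ m).aemeasurable
        (hξ n).aemeasurable).mp (hξiid.indepFun hmn), (hξlaw m).map_eq, (hξlaw n).map_eq]
    have hk2m : Measurable (fun p : (ℝ × ℝ) × (ℝ × ℝ) => k (p.1.1, p.2)) :=
      hkm.comp (measurable_fst.fst.prodMk measurable_snd)
    have hfst : ν.map Prod.fst = κ := by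
      rw [hν, Measure.map_map measurable_fst hXpair]; rfl
    calc ∫⁻ ω, ENNReal.ofReal ((g (ξ m ω).1 (ξ n ω).2 - g (ξ n ω).1 (ξ n ω).2) ^ 2) ∂μ
        = ∫⁻ p, k (p.1.1, p.2) ∂(μ.map (fun ω => (ξ m ω, ξ n ω))) :=
          (lintegral_map hk2m hpm).symm
      _ = ∫⁻ p, k (p.1.1, p.2) ∂(ν.prod ν) := by rw [hmap]
      _ = ∫⁻ a, ∫⁻ b, k (a.1, b) ∂ν ∂ν := lintegral_prod _ hk2m.aemeasurable
      _ = ∫⁻ a, G a.1 ∂ν := rfl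
      _ = ∫⁻ t, G t ∂(ν.map Prod.fst) := (lintegral_map hGm measurable_fst).symm
      _ = ∫⁻ t, G t ∂κ := by rw [hfst]
      _ = I := hI.symm

  -- integrability / finiteness of I
  have h2indep : IndepFun X₁' X₂ μ := hindep'.comp measurable_id measurable_snd
  have hid2 : IdentDistrib (fun ω => (X₁' ω, X₂ ω)) (fun ω => (X₁ ω, X₂ ω)) μ μ := by
    refine ⟨(hX₁'.prodMk hX₂).aemeasurable, hXpair.aemeasurable, ?_⟩
    rw [(indepFun_iff_map_prod_eq_prod_map_map hX₁'.aemeasurable hX₂.aemeasurable).mp h2indep,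
      hcopy.map_eq,
      ← (indepFun_iff_map_prod_eq_prod_map_map hX₁.aemeasurable hX₂.aemeasurable).mp hindep12]
  have hg2' : MemLp (fun ω => g (X₁' ω) (X₂ ω)) 2 μ :=
    ((hid2.comp hg).symm).memLp_snd hg2
  have hInt : Integrable (fun ω => (g (X₁' ω) (X₂ ω) - g (X₁ ω) (X₂ ω)) ^ 2) μ :=
    (hg2'.sub hg2).integrable_sq
  have hIne : I ≠ ⊤ := hInt.lintegral_lt_top.ne
  -- the random vector of samples
  set Ξ : Ω → (Fin N → ℝ × ℝ) := fun ω n => ξ n ω with hΞdef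
  have hΞ : Measurable Ξ := measurable_pi_lambda _ fun n => hξ n
  haveI : IsProbabilityMeasure (μ.map Ξ) := Measure.isProbabilityMeasure_map hΞ.aemeasurable
  haveI : IsProbabilityMeasure (μ.map π) := by rw [hπunif]; infer_instance
  set K : ℕ := Fintype.card (Equiv.Perm (Fin N)) with hKdef
  have hK0 : 0 < K := Fintype.card_pos
  -- real-valued summand as a function of (samples, permutation)
  set Fr : Fin N → (Fin N → ℝ × ℝ) × Equiv.Perm (Fin N) → ℝ := fun n p =>
    (g (p.1 (p.2 n)).1 (p.1 n).2 - g (p.1 n).1 (p.1 n).2) ^ 2 with hFrdef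
  have hFrσ : ∀ n (σ : Equiv.Perm (Fin N)), Measurable fun x => Fr n (x, σ) := by
    intro n σ
    have e1 : Measurable fun x : Fin N → ℝ × ℝ => x (σ n) := measurable_pi_apply _
    have e2 : Measurable fun x : Fin N → ℝ × ℝ => x n := measurable_pi_apply _
    exact ((hg.comp (e1.fst.prodMk e2.snd)).sub
      (hg.comp (e2.fst.prodMk e2.snd))).pow_const 2
  have hFr : ∀ n, Measurable (Fr n) := fun n => measurable_from_prod_countable_left (hFrσ n)
  have hpairm : Measurable fun ω => (Ξ ω, π ω) := hΞ.prodMk hπ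
  have hmapΞπ : μ.map (fun ω => (Ξ ω, π ω)) = (μ.map Ξ).prod (μ.map π) :=
    (indepFun_iff_map_prod_eq_prod_map_map hΞ.aemeasurable hπ.aemeasurable).mp hπindep.symm
  have hsingle : ∀ σ : Equiv.Perm (Fin N), (μ.map π) {σ} = (K : ℝ≥0∞)⁻¹ := by
    intro σ
    rw [hπunif, PMF.toMeasure_apply_singleton _ _ (measurableSet_singleton σ),
      PMF.uniformOfFintype_apply]
  set C : Fin N → ℕ := fun n => (Finset.univ.filter fun σ : Equiv.Perm (Fin N) => ¬ σ n = n).card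
    with hCdef
  -- per-coordinate expectation
  have hpern : ∀ n : Fin N,
      ∫⁻ ω, ENNReal.ofReal ((g (ξ (π ω n) ω).1 (ξ n ω).2 - g (ξ n ω).1 (ξ n ω).2) ^ 2) ∂μ
        = (C n : ℝ≥0∞) * (I * (K : ℝ≥0∞)⁻¹) := by
    intro n
    have hFm : Measurable fun p => ENNReal.ofReal (Fr n p) :=
      ENNReal.measurable_ofReal.comp (hFr n)
    have hinner : ∀ σ : Equiv.Perm (Fin N),
        ∫⁻ x, ENNReal.ofReal (Fr n (x, σ)) ∂(μ.map Ξ) = if σ n = n then 0 else I := by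
      intro σ
      have hf' : Measurable fun x : Fin N → ℝ × ℝ => ENNReal.ofReal (Fr n (x, σ)) :=
        ENNReal.measurable_ofReal.comp (hFrσ n σ)
      rw [lintegral_map hf' hΞ]
      by_cases hσ : σ n = n
      · rw [if_pos hσ]
        simp [hFrdef, hσ]
      · rw [if_neg hσ]
        exact key (σ n) n hσ
    calc ∫⁻ ω, ENNReal.ofReal ((g (ξ (π ω n) ω).1 (ξ n ω).2 - g (ξ n ω).1 (ξ n ω).2) ^ 2) ∂μ
        = ∫⁻ p, ENNReal.ofReal (Fr n p) ∂(μ.map fun ω => (Ξ ω, π ω)) :=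
          (lintegral_map hFm hpairm).symm
      _ = ∫⁻ p, ENNReal.ofReal (Fr n p) ∂((μ.map Ξ).prod (μ.map π)) := by rw [hmapΞπ]
      _ = ∫⁻ x, ∫⁻ σ, ENNReal.ofReal (Fr n (x, σ)) ∂(μ.map π) ∂(μ.map Ξ) :=
          lintegral_prod _ hFm.aemeasurable
      _ = ∫⁻ x, ∑' σ : Equiv.Perm (Fin N),
            ENNReal.ofReal (Fr n (x, σ)) * (μ.map π) {σ} ∂(μ.map Ξ) := by
          refine lintegral_congr fun x => ?_
          exact lintegral_countable' _
      _ = ∫⁻ x, ∑ σ : Equiv.Perm (Fin N),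
            ENNReal.ofReal (Fr n (x, σ)) * (K : ℝ≥0∞)⁻¹ ∂(μ.map Ξ) := by
          refine lintegral_congr fun x => ?_
          rw [tsum_fintype]
          exact Finset.sum_congr rfl fun σ _ => by rw [hsingle σ]
      _ = ∑ σ : Equiv.Perm (Fin N),
            ∫⁻ x, ENNReal.ofReal (Fr n (x, σ)) * (K : ℝ≥0∞)⁻¹ ∂(μ.map Ξ) :=
          lintegral_finset_sum _ fun σ _ =>
            (ENNReal.measurable_ofReal.comp (hFrσ n σ)).mul_const _
      _ = ∑ σ : Equiv.Perm (Fin N),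
            (∫⁻ x, ENNReal.ofReal (Fr n (x, σ)) ∂(μ.map Ξ)) * (K : ℝ≥0∞)⁻¹ :=
          Finset.sum_congr rfl fun σ _ =>
            lintegral_mul_const _ (ENNReal.measurable_ofReal.comp (hFrσ n σ))
      _ = ∑ σ : Equiv.Perm (Fin N), (if σ n = n then 0 else I) * (K : ℝ≥0∞)⁻¹ :=
          Finset.sum_congr rfl fun σ _ => by rw [hinner σ]
      _ = (C n : ℝ≥0∞) * (I * (K : ℝ≥0∞)⁻¹) := by
          simp only [ite_mul, zero_mul]
          rw [Finset.sum_ite, Finset.sum_const_zero, Finset.sum_const, zero_add, nsmul_eq_mul]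
  -- measurability of the empirical summands
  have htermm : ∀ n : Fin N,
      Measurable fun ω => (g (ξ (π ω n) ω).1 (ξ n ω).2 - g (ξ n ω).1 (ξ n ω).2) ^ 2 :=
    fun n => (hFr n).comp hpairm
  -- rewrite the left-hand side
  rw [MeasureTheory.integral_const_mul]
  have hLint : ∫ ω, ∑ n : Fin N,
      (g (ξ (π ω n) ω).1 (ξ n ω).2 - g (ξ n ω).1 (ξ n ω).2) ^ 2 ∂μ
      = (∑ n : Fin N, (C n : ℝ≥0∞) * (I * (K : ℝ≥0∞)⁻¹)).toReal := by
    rw [integral_eq_lintegral_of_nonneg_ae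
      (Filter.Eventually.of_forall fun ω => Finset.sum_nonneg fun n _ => sq_nonneg _)
      (Finset.measurable_sum Finset.univ fun n _ => htermm n).aestronglyMeasurable]
    congr 1
    calc ∫⁻ ω, ENNReal.ofReal (∑ n : Fin N,
          (g (ξ (π ω n) ω).1 (ξ n ω).2 - g (ξ n ω).1 (ξ n ω).2) ^ 2) ∂μ
        = ∫⁻ ω, ∑ n : Fin N, ENNReal.ofReal
            ((g (ξ (π ω n) ω).1 (ξ n ω).2 - g (ξ n ω).1 (ξ n ω).2) ^ 2) ∂μ := by
          refine lintegral_congr fun ω => ?_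
          exact ENNReal.ofReal_sum_of_nonneg fun n _ => sq_nonneg _
      _ = ∑ n : Fin N, ∫⁻ ω, ENNReal.ofReal
            ((g (ξ (π ω n) ω).1 (ξ n ω).2 - g (ξ n ω).1 (ξ n ω).2) ^ 2) ∂μ :=
          lintegral_finset_sum _ fun n _ => ENNReal.measurable_ofReal.comp (htermm n)
      _ = ∑ n : Fin N, (C n : ℝ≥0∞) * (I * (K : ℝ≥0∞)⁻¹) :=
          Finset.sum_congr rfl fun n _ => hpern n
  rw [hLint]
  -- rewrite the right-hand side
  have hRint : ∫ ω, (g (X₁' ω) (X₂ ω) - g (X₁ ω) (X₂ ω)) ^ 2 ∂μ = I.toReal := by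
    rw [integral_eq_lintegral_of_nonneg_ae
      (Filter.Eventually.of_forall fun ω => sq_nonneg _)
      hInt.aestronglyMeasurable]
  rw [hRint]
  -- final arithmetic
  have hterm_ne : ∀ n : Fin N, (C n : ℝ≥0∞) * (I * (K : ℝ≥0∞)⁻¹) ≠ ⊤ := by
    intro n
    refine ENNReal.mul_ne_top (ENNReal.natCast_ne_top _) (ENNReal.mul_ne_top hIne ?_)
    exact ENNReal.inv_ne_top.mpr (by exact_mod_cast hK0.ne')
  rw [ENNReal.toReal_sum fun n _ => hterm_ne n]
  have hCval : ∀ n : Fin N, ((C n : ℝ≥0∞) * (I * (K : ℝ≥0∞)⁻¹)).toReal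
      = (1 - 1 / (N : ℝ)) * I.toReal := by
    intro n
    have hstab := card_fixing_mul N n
    have hCS : C n + (Finset.univ.filter fun σ : Equiv.Perm (Fin N) => σ n = n).card = K := by
      rw [hCdef, add_comm]
      exact Finset.card_filter_add_card_filter_not _
    have hCN : (C n : ℝ) * N = (K : ℝ) * ((N : ℝ) - 1) := by
      have h1 : ((Finset.univ.filter fun σ : Equiv.Perm (Fin N) => σ n = n).card : ℝ) * N
          = (K : ℝ) := by exact_mod_cast hstab
      have h2 : (C n : ℝ) + ((Finset.univ.filter
          fun σ : Equiv.Perm (Fin N) => σ n = n).card : ℝ) = (K : ℝ) := by exact_mod_cast hCS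
      nlinarith [h1, h2]
    rw [ENNReal.toReal_mul, ENNReal.toReal_mul, ENNReal.toReal_inv,
      ENNReal.toReal_natCast, ENNReal.toReal_natCast]
    have hKR : (0 : ℝ) < K := by exact_mod_cast hK0
    have hNR : (0 : ℝ) < N := by exact_mod_cast hN
    field_simp
    linear_combination I.toReal * hCN
  rw [Finset.sum_congr rfl fun n _ => hCval n, Finset.sum_const, Finset.card_univ,
    Fintype.card_fin, nsmul_eq_mul]
  have hNR : (N : ℝ) ≠ 0 := by positivity
  field_simp
end
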